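/- arXiv:2203.02904 — 2 statements merged into one kernel-verified Lean document; each statement's English description precedes it below -/
import Mathlib

section
/- Let M be a metric space with at least 3 points, s(M) > 0 and e(M) > 0, and let ε be a real number with 0 < ε ≤ s(M)/8 and ε < e(M)/8. Let X and Y be metric spaces admitting correspondences R_X between M and X and R_Y between M and Y with dis R_X < 2ε and dis R_Y < 2ε; put X_i = R_X(i) and Y_i = R_Y(i) for i ∈ M. Then there exists a correspondence R between X and Y with dis R < 4ε, and every correspondence R between X and Y with dis R < 4ε decomposes as R = ⊔_{i∈M} R_i with R_i a correspondence between X_i and Y_i; that is, for all (x,y) ∈ R and all i ∈ M, x ∈ X_i if and only if y ∈ Y_i. -/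
/-!
The existence part is witnessed by the composite correspondence `R_X⁻¹ ∘ R_Y`, whose
distortion is at most `dis R_X + dis R_Y < 4ε`. For the decomposition, given `R` with
`dis R < 4ε`, the composite `S = R_X ∘ R ∘ R_Y⁻¹` is a self-correspondence of `M` with
`dis S < 8ε ≤ s(M)`. Since `M` is `s(M)`-discrete, `S` is then the graph of a bijection `f` of
`M`, and `dis f ≤ dis S < e(M)` forces `f = id`. Hence `S` lies in the diagonal, which says
exactly that `R` matches `X_i` with `Y_i`.
-/

open ENNReal

/-- A correspondence between `A` and `B`: a relation whose projections are surjective. -/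
def IsCorr {A B : Type*} (R : Set (A × B)) : Prop :=
  (∀ a, ∃ b, (a, b) ∈ R) ∧ ∀ b, ∃ a, (a, b) ∈ R

/-- Distortion of a relation between metric spaces, a value in `[0,∞]`. -/
noncomputable def disMS {A B : Type*} [MetricSpace A] [MetricSpace B]
    (σ : Set (A × B)) : ℝ≥0∞ :=
  ⨆ p ∈ σ, ⨆ q ∈ σ, ENNReal.ofReal |dist p.1 q.1 - dist p.2 q.2|

/-- `s(M) = inf{dist(x,x') : x ≠ x'}`. -/
noncomputable def sSpace (M : Type*) [MetricSpace M] : ℝ :=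
  sInf {r : ℝ | ∃ x y : M, x ≠ y ∧ r = dist x y}

/-- `e(M) = inf{dis f : f : M ≃ M, f ≠ id}`, a value in `[0,∞]`. -/
noncomputable def eSpace (M : Type*) [MetricSpace M] : ℝ≥0∞ :=
  ⨅ f ∈ {f : M ≃ M | f ≠ Equiv.refl M},
    ⨆ x : M, ⨆ y : M, ENNReal.ofReal |dist (f x) (f y) - dist x y|

open SetRel

section Correspondence

variable {A B C : Type*}

theorem IsCorr.inv {R : SetRel A B} (hR : IsCorr R) : IsCorr R.inv :=
  ⟨hR.2, hR.1⟩

theorem IsCorr.comp {R : SetRel A B} {S : SetRel B C} (hR : IsCorr R) (hS : IsCorr S) :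
    IsCorr (R ○ S) := by
  refine ⟨fun a => ?_, fun c => ?_⟩
  · obtain ⟨b, hab⟩ := hR.1 a
    obtain ⟨c, hbc⟩ := hS.1 b
    exact ⟨c, prodMk_mem_comp hab hbc⟩
  · obtain ⟨b, hbc⟩ := hS.2 c
    obtain ⟨a, hab⟩ := hR.2 b
    exact ⟨a, prodMk_mem_comp hab hbc⟩

theorem IsCorr.exists_equiv {R : SetRel A B} (hR : IsCorr R)
    (hfun : ∀ a b b', (a, b) ∈ R → (a, b') ∈ R → b = b')
    (hinj : ∀ a a' b, (a, b) ∈ R → (a', b) ∈ R → a = a') :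
    ∃ f : A ≃ B, ∀ a, (a, f a) ∈ R := by
  choose f hf using hR.1
  choose g hg using hR.2
  refine ⟨⟨f, g, fun a => ?_, fun b => ?_⟩, hf⟩
  · exact hinj _ _ _ (hg (f a)) (hf a)
  · exact hfun _ _ _ (hf (g b)) (hg b)

end Correspondence

section Distortion

variable {A B C : Type*} [MetricSpace A] [MetricSpace B] [MetricSpace C]

theorem ofReal_abs_dist_sub_le_disMS {σ : SetRel A B} {p q : A × B}
    (hp : p ∈ σ) (hq : q ∈ σ) :
    ENNReal.ofReal |dist p.1 q.1 - dist p.2 q.2| ≤ disMS σ :=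
  le_iSup₂_of_le p hp (le_iSup₂_of_le q hq le_rfl)

theorem abs_dist_sub_lt_of_disMS_lt {σ : SetRel A B} {c : ℝ} (h : disMS σ < ENNReal.ofReal c)
    {p q : A × B} (hp : p ∈ σ) (hq : q ∈ σ) : |dist p.1 q.1 - dist p.2 q.2| < c :=
  (ENNReal.ofReal_lt_ofReal_iff_of_nonneg (abs_nonneg _)).mp
    ((ofReal_abs_dist_sub_le_disMS hp hq).trans_lt h)

theorem disMS_inv_le (σ : SetRel A B) : disMS σ.inv ≤ disMS σ :=
  iSup₂_le fun p hp => iSup₂_le fun q hq => by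
    rw [abs_sub_comm]
    exact ofReal_abs_dist_sub_le_disMS (p := p.swap) (q := q.swap) hp hq

@[simp]
theorem disMS_inv (σ : SetRel A B) : disMS σ.inv = disMS σ :=
  (disMS_inv_le σ).antisymm (disMS_inv_le σ.inv)

theorem disMS_comp_le (R : SetRel A B) (S : SetRel B C) :
    disMS (R ○ S) ≤ disMS R + disMS S := by
  refine iSup₂_le fun ⟨a, c⟩ ⟨b, hab, hbc⟩ => ?_
  refine iSup₂_le fun ⟨a', c'⟩ ⟨b', hab', hbc'⟩ => ?_
  calc ENNReal.ofReal |dist a a' - dist c c'|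
      ≤ ENNReal.ofReal (|dist a a' - dist b b'| + |dist b b' - dist c c'|) :=
        ENNReal.ofReal_le_ofReal (abs_sub_le _ _ _)
    _ = ENNReal.ofReal |dist a a' - dist b b'| + ENNReal.ofReal |dist b b' - dist c c'| :=
        ENNReal.ofReal_add (abs_nonneg _) (abs_nonneg _)
    _ ≤ disMS R + disMS S :=
        add_le_add (ofReal_abs_dist_sub_le_disMS hab hab') (ofReal_abs_dist_sub_le_disMS hbc hbc')

end Distortion

section DiscreteAsymmetric

variable {A M : Type*} [MetricSpace A] [MetricSpace M]

theorem sSpace_le_dist {x y : M} (h : x ≠ y) : sSpace M ≤ dist x y :=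
  csInf_le ⟨0, fun _ ⟨_, _, _, hr⟩ => hr ▸ dist_nonneg⟩ ⟨x, y, h, rfl⟩

theorem eSpace_le_of_forall_le {f : M ≃ M} (hf : f ≠ Equiv.refl M) {c : ℝ≥0∞}
    (h : ∀ x y, ENNReal.ofReal |dist (f x) (f y) - dist x y| ≤ c) : eSpace M ≤ c :=
  (iInf₂_le f hf).trans (iSup₂_le h)

theorem eq_of_mem_of_disMS_lt_sSpace {S : SetRel A M}
    (hS : disMS S < ENNReal.ofReal (sSpace M)) {a : A} {m m' : M}
    (h : (a, m) ∈ S) (h' : (a, m') ∈ S) : m = m' := by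
  by_contra hne
  have hlt := abs_dist_sub_lt_of_disMS_lt hS h h'
  rw [dist_self, zero_sub, abs_neg, abs_of_nonneg dist_nonneg] at hlt
  exact (sSpace_le_dist hne).not_gt hlt

theorem IsCorr.eq_of_mem_of_disMS_lt {S : SetRel M M} (hS : IsCorr S)
    (hs : disMS S < ENNReal.ofReal (sSpace M)) (he : disMS S < eSpace M) ⦃i j : M⦄
    (hij : (i, j) ∈ S) : i = j := by
  have hs' : disMS S.inv < ENNReal.ofReal (sSpace M) := by rwa [disMS_inv]
  obtain ⟨f, hf⟩ := hS.exists_equiv (fun _ _ _ => eq_of_mem_of_disMS_lt_sSpace hs)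
    (fun _ _ _ h h' => eq_of_mem_of_disMS_lt_sSpace (S := S.inv) hs' h h')
  have hf_refl : f = Equiv.refl M := by
    by_contra hne
    refine he.not_ge (eSpace_le_of_forall_le hne fun x y => ?_)
    rw [abs_sub_comm]
    exact ofReal_abs_dist_sub_le_disMS (hf x) (hf y)
  calc i = f i := by rw [hf_refl, Equiv.refl_apply]
    _ = j := eq_of_mem_of_disMS_lt_sSpace hs (hf i) hij

end DiscreteAsymmetric

theorem stmt_7_general {M X Y : Type*} [MetricSpace M] [MetricSpace X] [MetricSpace Y]
    (ε : ℝ) (hε0 : 0 < ε) (hε1 : ε ≤ sSpace M / 8) (hε2 : ENNReal.ofReal ε < eSpace M / 8)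
    (RX : Set (M × X)) (hRX : IsCorr RX) (hdX : disMS RX < ENNReal.ofReal (2 * ε))
    (RY : Set (M × Y)) (hRY : IsCorr RY) (hdY : disMS RY < ENNReal.ofReal (2 * ε)) :
    (∃ R : Set (X × Y), IsCorr R ∧ disMS R < ENNReal.ofReal (4 * ε)) ∧
    ∀ R : Set (X × Y), IsCorr R → disMS R < ENNReal.ofReal (4 * ε) →
      ∀ x y, (x, y) ∈ R → ∀ i : M, ((i, x) ∈ RX ↔ (i, y) ∈ RY) := by
  have h2ε : 0 ≤ 2 * ε := by positivity
  have h4ε : 0 ≤ 4 * ε := by positivity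
  refine ⟨⟨SetRel.inv RX ○ RY, hRX.inv.comp hRY, ?_⟩, fun R hR hdR x y hxy i => ?_⟩
  · calc disMS (SetRel.inv RX ○ RY) ≤ disMS RX + disMS RY := by
          rw [← disMS_inv RX]
          exact disMS_comp_le _ _
      _ < ENNReal.ofReal (2 * ε) + ENNReal.ofReal (2 * ε) := ENNReal.add_lt_add hdX hdY
      _ = ENNReal.ofReal (4 * ε) := by rw [← ENNReal.ofReal_add h2ε h2ε]; ring_nf
  have hdS : disMS (RX ○ R ○ SetRel.inv RY) < ENNReal.ofReal (8 * ε) := calc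
    _ ≤ disMS RX + disMS R + disMS RY :=
      (disMS_comp_le _ _).trans (add_le_add (disMS_comp_le RX R) (disMS_inv RY).le)
    _ < ENNReal.ofReal (2 * ε) + ENNReal.ofReal (4 * ε) + ENNReal.ofReal (2 * ε) :=
      ENNReal.add_lt_add (ENNReal.add_lt_add hdX hdR) hdY
    _ = ENNReal.ofReal (8 * ε) := by
      rw [← ENNReal.ofReal_add h2ε h4ε, ← ENNReal.ofReal_add (by positivity) h2ε]; ring_nf
  have h8s : ENNReal.ofReal (8 * ε) ≤ ENNReal.ofReal (sSpace M) :=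
    ENNReal.ofReal_le_ofReal (by linarith)
  have h8e : ENNReal.ofReal (8 * ε) < eSpace M := by
    rw [ENNReal.ofReal_mul (by norm_num), ENNReal.ofReal_ofNat]
    exact ENNReal.mul_lt_of_lt_div' hε2
  have hdiag := ((hRX.comp hR).comp hRY.inv).eq_of_mem_of_disMS_lt
    (hdS.trans_le h8s) (hdS.trans h8e)
  constructor
  · intro hix
    obtain ⟨j, hjy⟩ := hRY.2 y
    obtain rfl := hdiag (prodMk_mem_comp (prodMk_mem_comp hix hxy) hjy)
    exact hjy
  · intro hiy
    obtain ⟨j, hjx⟩ := hRX.2 x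
    obtain rfl := hdiag (prodMk_mem_comp (prodMk_mem_comp hjx hxy) hiy)
    exact hjx

/-- Let `M` be totally discrete and totally asymmetric with at least 3 points,
`0 < ε ≤ s(M)/8`, `ε < e(M)/8`, and let `X`, `Y` admit correspondences with `M` of
distortion `< 2ε` (defining the canonical partitions `X_i = R_X(i)`, `Y_i = R_Y(i)`).
Then there is a correspondence between `X` and `Y` of distortion `< 4ε`, and every such
correspondence respects the canonical partitions: for `(x,y) ∈ R`, `x ∈ X_i ↔ y ∈ Y_i`. -/
theorem stmt_7 {M X Y : Type*} [MetricSpace M] [MetricSpace X] [MetricSpace Y]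
    (hM : ∃ x y z : M, x ≠ y ∧ x ≠ z ∧ y ≠ z)
    (hs : 0 < sSpace M) (he : 0 < eSpace M)
    (ε : ℝ) (hε0 : 0 < ε) (hε1 : ε ≤ sSpace M / 8) (hε2 : ENNReal.ofReal ε < eSpace M / 8)
    (RX : Set (M × X)) (hRX : IsCorr RX) (hdX : disMS RX < ENNReal.ofReal (2 * ε))
    (RY : Set (M × Y)) (hRY : IsCorr RY) (hdY : disMS RY < ENNReal.ofReal (2 * ε)) :
    (∃ R : Set (X × Y), IsCorr R ∧ disMS R < ENNReal.ofReal (4 * ε)) ∧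
    ∀ R : Set (X × Y), IsCorr R → disMS R < ENNReal.ofReal (4 * ε) →
      ∀ x y, (x, y) ∈ R → ∀ i : M, ((i, x) ∈ RX ↔ (i, y) ∈ RY) :=
  stmt_7_general ε hε0 hε1 hε2 RX hRX hdX RY hRY hdY
end

section
/- Let M and X be metric spaces and let R be a correspondence between M and X whose distortion satisfies dis R < s(M) and dis R < s(X). Then R is the graph of a bijection from M to X; i.e., for every i ∈ M the set R(i) is a singleton and for every x ∈ X the set R^{-1}(x) = {i ∈ M : (i,x) ∈ R} is a singleton. -/
open ENNReal

lemma le_disMS {A B : Type*} [MetricSpace A] [MetricSpace B] {R : Set (A × B)}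
    {p q : A × B} (hp : p ∈ R) (hq : q ∈ R) :
    ENNReal.ofReal |dist p.1 q.1 - dist p.2 q.2| ≤ disMS R := by
  exact le_iSup₂_of_le p hp (le_iSup₂_of_le q hq le_rfl)

lemma sSpace_le {M : Type*} [MetricSpace M] {x y : M} (h : x ≠ y) :
    sSpace M ≤ dist x y := by
  apply csInf_le
  · exact ⟨0, fun r ⟨a, b, _, hr⟩ => hr ▸ dist_nonneg⟩
  · exact ⟨x, y, h, rfl⟩

/-- A correspondence between `M` and `X` with distortion less than both `s(M)` and `s(X)`
is a graph of a bijection: every image `R(i)` and every pre-image `R⁻¹(x)` is a singleton. -/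
theorem stmt_17 {M X : Type*} [MetricSpace M] [MetricSpace X]
    (R : Set (M × X)) (hR : IsCorr R)
    (h1 : disMS R < ENNReal.ofReal (sSpace M))
    (h2 : disMS R < ENNReal.ofReal (sSpace X)) :
    (∀ i : M, ∃! x : X, (i, x) ∈ R) ∧ ∀ x : X, ∃! i : M, (i, x) ∈ R := by
  constructor
  · intro i
    obtain ⟨x, hx⟩ := hR.1 i
    refine ⟨x, hx, fun y hy => ?_⟩
    by_contra hne
    have hle := le_disMS (R := R) hy hx
    simp only [dist_self, zero_sub, abs_neg, abs_of_nonneg dist_nonneg] at hle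
    have : ENNReal.ofReal (sSpace X) ≤ ENNReal.ofReal (dist y x) :=
      ENNReal.ofReal_le_ofReal (sSpace_le hne)
    exact absurd (this.trans hle) (not_le.mpr h2)
  · intro x
    obtain ⟨i, hi⟩ := hR.2 x
    refine ⟨i, hi, fun j hj => ?_⟩
    by_contra hne
    have hle := le_disMS (R := R) hj hi
    simp only [dist_self, sub_zero, abs_of_nonneg dist_nonneg] at hle
    have : ENNReal.ofReal (sSpace M) ≤ ENNReal.ofReal (dist j i) :=
      ENNReal.ofReal_le_ofReal (sSpace_le hne)
    exact absurd (this.trans hle) (not_le.mpr h1)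
end
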